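/- arXiv:1904.07675 — 2 statements merged into one kernel-verified Lean document; each statement's English description precedes it below -/
import Mathlib

section
/- With the Bernoulli-sequence model and the Lead Stubborn Mining cycle length L (L = 1 if X_0 = H, and otherwise L = ρ/2 + 1 where ρ = inf{k ≥ 1 : W_k = 0}), L is almost surely finite and E[L] = (p − q + pq)/(p − q). -/
open MeasureTheory ENNReal
open scoped BigOperators Classical

/-- The `n`-th Catalan number `C_n = (2n)! / (n! * (n+1)!)`, as a real number. -/
noncomputable def catalanC (n : ℕ) : ℝ :=
  (Nat.factorial (2 * n) : ℝ) / ((Nat.factorial n : ℝ) * (Nat.factorial (n + 1) : ℝ))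

/-- Blocks are labelled by `Bool`: `true` = `S` (selfish/attacker block),
`false` = `H` (honest block). The walk `W k = #{i < k : X_i = S} - #{i < k : X_i = H}`. -/
def walkW (ω : ℕ → Bool) (k : ℕ) : ℤ :=
  (((Finset.range k).filter fun i => ω i = true).card : ℤ) -
    (((Finset.range k).filter fun i => ω i = false).card : ℤ)

/-- The Lead Stubborn Mining cycle length: `L = 1` if `X_0 = H`, and otherwise
`L = ρ/2 + 1` where `ρ = inf {k ≥ 1 : W_k = 0}` is the first return time of the walk
to `0` (with `L = ∞` if the walk never returns to `0`). -/
noncomputable def lsmL (ω : ℕ → Bool) : ℕ∞ :=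
  if ω 0 = false then 1
  else if _h : {k : ℕ | 1 ≤ k ∧ walkW ω k = 0}.Nonempty then
    ((sInf {k : ℕ | 1 ≤ k ∧ walkW ω k = 0} / 2 + 1 : ℕ) : ℕ∞)
  else ⊤



open Finset

lemma catalan_real_le (n : ℕ) : (catalan n : ℝ) ≤ 4 ^ n := by
  have h1 : catalan n ≤ n.centralBinom := by
    have := succ_mul_catalan_eq_centralBinom n
    nlinarith [Nat.le_of_eq this.symm]
  have h2 : n.centralBinom ≤ 4 ^ n := by
    have hmem : n ∈ range (2 * n + 1) := by simp; omega
    calc n.centralBinom = (2*n).choose n := rfl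
      _ ≤ ∑ m ∈ range (2 * n + 1), (2*n).choose m :=
          Finset.single_le_sum (fun i _ => Nat.zero_le _) hmem
      _ = 2 ^ (2 * n) := Nat.sum_range_choose (2*n)
      _ = 4 ^ n := by rw [pow_mul]; norm_num
  calc (catalan n : ℝ) ≤ (n.centralBinom : ℝ) := by exact_mod_cast h1
    _ ≤ ((4:ℕ) ^ n : ℝ) := by exact_mod_cast h2
    _ = 4 ^ n := by norm_num

lemma nat_catalan_rec (n : ℕ) : (n + 2) * catalan (n+1) = (4*n+2) * catalan n := by
  have h1 := succ_mul_catalan_eq_centralBinom (n+1)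
  have h2 := Nat.succ_mul_centralBinom_succ n
  have h3 := succ_mul_catalan_eq_centralBinom n
  have h1' : (n + 2) * catalan (n+1) = (n+1).centralBinom := h1
  have key : (n+1) * ((n+2) * catalan (n+1)) = (n+1) * ((4*n+2) * catalan n) := by
    calc (n+1) * ((n+2) * catalan (n+1)) = (n+1) * (n+1).centralBinom := by rw [h1']
      _ = 2*(2*n+1) * n.centralBinom := h2
      _ = 2*(2*n+1) * ((n+1) * catalan n) := by rw [h3]
      _ = (n+1) * ((4*n+2) * catalan n) := by ring
  exact Nat.eq_of_mul_eq_mul_left (by omega) key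

section

variable {q p : ℝ} (hq0 : 0 < q) (hq : q < 1/2) (hp : p = 1 - q)

include hq0 hq hp

private lemma hx0 : 0 < p * q := by nlinarith
private lemma hx4 : 4 * (p * q) < 1 := by nlinarith

lemma summable_cat : Summable (fun n : ℕ => (catalan n : ℝ) * (p*q) ^ n) := by
  have hx := hx0 hq0 hq hp
  refine Summable.of_nonneg_of_le
    (fun n => mul_nonneg (Nat.cast_nonneg _) (pow_nonneg hx.le n)) (fun n => ?_)
    (summable_geometric_of_lt_one (r := 4*(p*q)) (by nlinarith) (by nlinarith))
  have hxn : (0:ℝ) ≤ (p*q)^n := pow_nonneg hx.le n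
  calc (catalan n : ℝ) * (p*q) ^ n ≤ 4 ^ n * (p*q) ^ n :=
        mul_le_mul_of_nonneg_right (catalan_real_le n) hxn
    _ = (4*(p*q)) ^ n := (mul_pow 4 (p*q) n).symm

lemma summable_ncat : Summable (fun n : ℕ => ((n:ℝ)+1) * (catalan n : ℝ) * (p*q) ^ n) := by
  have h4 : ‖4 * (p*q)‖ < 1 := by
    rw [Real.norm_eq_abs, abs_of_pos (by nlinarith)]; nlinarith
  have h1 : Summable (fun n : ℕ => ((n:ℝ)+1) * (4*(p*q)) ^ n) := by
    have ha := summable_pow_mul_geometric_of_norm_lt_one (R := ℝ) 1 h4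
    have hb := summable_pow_mul_geometric_of_norm_lt_one (R := ℝ) 0 h4
    have := ha.add hb
    refine this.congr fun n => ?_
    simp; ring
  have hx := hx0 hq0 hq hp
  refine Summable.of_nonneg_of_le
    (fun n => mul_nonneg (mul_nonneg (by positivity) (Nat.cast_nonneg _))
      (pow_nonneg hx.le n)) (fun n => ?_) h1
  have hxn : (0:ℝ) ≤ (p*q)^n := pow_nonneg hx.le n
  have hn1 : (0:ℝ) ≤ (n:ℝ)+1 := by positivity
  calc ((n:ℝ)+1) * (catalan n : ℝ) * (p*q) ^ n ≤ ((n:ℝ)+1) * 4 ^ n * (p*q) ^ n := by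
        have := mul_le_mul_of_nonneg_left (catalan_real_le n) hn1
        exact mul_le_mul_of_nonneg_right this hxn
    _ = ((n:ℝ)+1) * (4*(p*q)) ^ n := by rw [mul_pow]; ring

lemma sum_cat_le_two : ∀ N, ∑ n ∈ range N, (catalan n : ℝ) * (p*q) ^ n ≤ 2 := by
  intro N
  induction N with
  | zero => simp
  | succ N ih =>
    have hx := hx0 hq0 hq hp
    have hnn : ∀ n : ℕ, (0:ℝ) ≤ (catalan n : ℝ) * (p*q) ^ n :=
      fun n => mul_nonneg (Nat.cast_nonneg _) (pow_nonneg hx.le n)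
    have ih0 : 0 ≤ ∑ n ∈ range N, (catalan n : ℝ) * (p*q) ^ n :=
      Finset.sum_nonneg fun n _ => hnn n
    rw [Finset.sum_range_succ']
    have key : ∑ i ∈ range N, (catalan (i+1) : ℝ) * (p*q) ^ (i+1) ≤
        (p*q) * (∑ n ∈ range N, (catalan n : ℝ) * (p*q) ^ n) ^ 2 := by
      have hterm : ∀ i : ℕ, (catalan (i+1) : ℝ) * (p*q) ^ (i+1) =
          (p*q) * ∑ ab ∈ Finset.HasAntidiagonal.antidiagonal i,
            ((catalan ab.1 : ℝ) * (p*q) ^ ab.1) * ((catalan ab.2 : ℝ) * (p*q) ^ ab.2) := by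
        intro i
        rw [catalan_succ']
        push_cast
        rw [Finset.sum_mul, Finset.mul_sum]
        apply Finset.sum_congr rfl
        intro ab hab
        have := Finset.HasAntidiagonal.mem_antidiagonal.mp hab
        rw [← this, pow_add, pow_add, pow_one]
        ring
      calc ∑ i ∈ range N, (catalan (i+1) : ℝ) * (p*q) ^ (i+1)
          = (p*q) * ∑ i ∈ range N, ∑ ab ∈ Finset.HasAntidiagonal.antidiagonal i,
              ((catalan ab.1 : ℝ) * (p*q) ^ ab.1) * ((catalan ab.2 : ℝ) * (p*q) ^ ab.2) := by
            rw [Finset.mul_sum]; exact Finset.sum_congr rfl fun i _ => hterm i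
        _ ≤ (p*q) * (∑ n ∈ range N, (catalan n : ℝ) * (p*q) ^ n) ^ 2 := by
            apply mul_le_mul_of_nonneg_left _ (le_of_lt (hx0 hq0 hq hp))
            rw [sq, Finset.sum_mul_sum, ← Finset.sum_product']
            rw [← Finset.sum_biUnion]
            · apply Finset.sum_le_sum_of_subset_of_nonneg
              · intro ab hab
                simp only [Finset.mem_biUnion, Finset.mem_range] at hab
                obtain ⟨i, hi, hab⟩ := hab
                have := Finset.HasAntidiagonal.mem_antidiagonal.mp hab
                simp only [Finset.mem_product, Finset.mem_range]
                omega
              · intro ab _ _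
                exact mul_nonneg (hnn ab.1) (hnn ab.2)
            · intro i _ j _ hij
              apply Finset.disjoint_left.mpr
              intro ab h1 h2
              have e1 := Finset.HasAntidiagonal.mem_antidiagonal.mp h1
              have e2 := Finset.HasAntidiagonal.mem_antidiagonal.mp h2
              exact hij (by omega)
    have h2 : (p*q) * (∑ n ∈ range N, (catalan n : ℝ) * (p*q) ^ n) ^ 2 ≤ 1 := by
      nlinarith [hx0 hq0 hq hp, hx4 hq0 hq hp]
    simp only [catalan_zero, Nat.cast_one, pow_zero, mul_one, one_mul]
    linarith

lemma tsum_cat_eq : ∑' n : ℕ, (catalan n : ℝ) * (p*q) ^ n = 1 / p := by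
  set s := ∑' n : ℕ, (catalan n : ℝ) * (p*q) ^ n with hsdef
  have hx := hx0 hq0 hq hp
  have hnn : ∀ n : ℕ, (0:ℝ) ≤ (catalan n : ℝ) * (p*q) ^ n :=
    fun n => mul_nonneg (Nat.cast_nonneg _) (pow_nonneg hx.le n)
  have hsum := summable_cat hq0 hq hp
  have hs2 : s ≤ 2 := Real.tsum_le_of_sum_range_le hnn (sum_cat_le_two hq0 hq hp)
  have habs : Summable (fun n : ℕ => ‖(catalan n : ℝ) * (p*q) ^ n‖) := by
    refine hsum.congr fun n => ?_
    rw [Real.norm_eq_abs, abs_of_nonneg (hnn n)]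
  have hquad : (p*q) * s ^ 2 = s - 1 := by
    have hcauchy : s * s = ∑' n : ℕ, ∑ ab ∈ Finset.HasAntidiagonal.antidiagonal n,
        ((catalan ab.1 : ℝ) * (p*q) ^ ab.1) * ((catalan ab.2 : ℝ) * (p*q) ^ ab.2) :=
      tsum_mul_tsum_eq_tsum_sum_antidiagonal_of_summable_norm habs habs
    have hinner : ∀ n : ℕ, ∑ ab ∈ Finset.HasAntidiagonal.antidiagonal n,
        ((catalan ab.1 : ℝ) * (p*q) ^ ab.1) * ((catalan ab.2 : ℝ) * (p*q) ^ ab.2)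
        = (catalan (n+1) : ℝ) * (p*q) ^ n := by
      intro n
      rw [catalan_succ']
      push_cast
      rw [Finset.sum_mul]
      apply Finset.sum_congr rfl
      intro ab hab
      have := Finset.HasAntidiagonal.mem_antidiagonal.mp hab
      rw [← this, pow_add]; ring
    rw [tsum_congr hinner] at hcauchy
    have hshift : s = 1 + ∑' n : ℕ, (catalan (n+1) : ℝ) * (p*q) ^ (n+1) := by
      rw [hsdef, hsum.tsum_eq_zero_add]
      simp
    have hx : ∑' n : ℕ, (catalan (n+1) : ℝ) * (p*q) ^ (n+1)
        = (p*q) * ∑' n : ℕ, (catalan (n+1) : ℝ) * (p*q) ^ n := by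
      rw [← tsum_mul_left]
      apply tsum_congr
      intro n
      rw [pow_succ]; ring
    rw [hx, ← hcauchy] at hshift
    nlinarith [hshift]
  have hp0 : (0:ℝ) < p := by nlinarith
  have key : (p * s - 1) * (q * s - 1) = 0 := by nlinarith [hquad]
  have h2 : q * s - 1 ≠ 0 := by nlinarith
  have : p * s = 1 := by
    rcases mul_eq_zero.mp key with h | h
    · linarith
    · exact absurd h h2
  field_simp
  linarith

lemma summable_nncat : Summable (fun n : ℕ => (n:ℝ) * (catalan n : ℝ) * (p*q) ^ n) := by
  refine ((summable_ncat hq0 hq hp).sub (summable_cat hq0 hq hp)).congr fun n => ?_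
  ring

lemma tsum_ncat_eq :
    ∑' n : ℕ, ((n:ℝ)+1) * (catalan n : ℝ) * (p*q) ^ n = 1/(p-q) := by
  set D := ∑' n : ℕ, ((n:ℝ)+1) * (catalan n : ℝ) * (p*q) ^ n with hDdef
  set s := ∑' n : ℕ, (catalan n : ℝ) * (p*q) ^ n with hsdef
  have hp0 : (0:ℝ) < p := by nlinarith
  have hpq : (0:ℝ) < p - q := by nlinarith
  have hD := summable_ncat hq0 hq hp
  have hs := summable_cat hq0 hq hp
  have hnsub := summable_nncat hq0 hq hp
  have hcast : ∀ n : ℕ, ((n:ℝ)+1+1) * (catalan (n+1) : ℝ) = (4*(n:ℝ)+2) * (catalan n : ℝ) := by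
    intro n
    have := nat_catalan_rec n
    have : ((n + 2) * catalan (n+1) : ℕ) = ((4*n+2) * catalan n : ℕ) := this
    calc ((n:ℝ)+1+1) * (catalan (n+1) : ℝ) = (((n+2) * catalan (n+1) : ℕ) : ℝ) := by
          push_cast; ring
      _ = (((4*n+2) * catalan n : ℕ) : ℝ) := by rw [this]
      _ = (4*(n:ℝ)+2) * (catalan n : ℝ) := by push_cast; ring
  have h1 : D - 1 = (p*q) * (4*(D - s) + 2*s) := by
    have hshift : D = 1 + ∑' n : ℕ, ((n:ℝ)+1+1) * (catalan (n+1) : ℝ) * (p*q) ^ (n+1) := by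
      rw [hDdef, hD.tsum_eq_zero_add]
      push_cast
      simp [catalan_zero]
    have hrw : ∑' n : ℕ, ((n:ℝ)+1+1) * (catalan (n+1) : ℝ) * (p*q) ^ (n+1)
        = (p*q) * ∑' n : ℕ, (4*(n:ℝ)+2) * (catalan n : ℝ) * (p*q) ^ n := by
      rw [← tsum_mul_left]
      apply tsum_congr
      intro n
      rw [hcast n, pow_succ]
      ring
    have hsplit : ∑' n : ℕ, (4*(n:ℝ)+2) * (catalan n : ℝ) * (p*q) ^ n
        = 4 * (D - s) + 2 * s := by
      have e1 : ∑' n : ℕ, (4*(n:ℝ)+2) * (catalan n : ℝ) * (p*q) ^ n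
          = ∑' n : ℕ, (4 * ((n:ℝ) * (catalan n : ℝ) * (p*q) ^ n)
              + 2 * ((catalan n : ℝ) * (p*q) ^ n)) := by
        apply tsum_congr; intro n; ring
      rw [e1, Summable.tsum_add (hnsub.mul_left 4) (hs.mul_left 2), tsum_mul_left, tsum_mul_left]
      have e2 : ∑' n : ℕ, (n:ℝ) * (catalan n : ℝ) * (p*q) ^ n = D - s := by
        rw [hDdef, hsdef, ← Summable.tsum_sub hD hs]
        apply tsum_congr; intro n; ring
      rw [e2]
    rw [hrw, hsplit] at hshift
    linarith
  have hs_eq : s = 1/p := tsum_cat_eq hq0 hq hp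
  have hxs : (p*q) * s = q := by rw [hs_eq]; field_simp
  have h2 : D * (1 - 4*(p*q)) = 1 - 2*q := by linear_combination h1 - 2*hxs
  have h3 : D * (p-q)^2 = p - q := by
    have : (1:ℝ) - 4*(p*q) = (p-q)^2 := by rw [hp]; ring
    rw [← this]
    rw [h2, hp]; ring
  rw [eq_div_iff hpq.ne']
  exact mul_left_cancel₀ hpq.ne' (by linear_combination h3)

lemma summable_cat_shift : Summable (fun n : ℕ => (catalan n : ℝ) * (p*q) ^ (n+1)) := by
  refine ((summable_cat hq0 hq hp).mul_left (p*q)).congr fun n => ?_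
  rw [pow_succ]; ring

lemma tsum_cat_shift : ∑' n : ℕ, (catalan n : ℝ) * (p*q) ^ (n+1) = q := by
  have hp0 : (0:ℝ) < p := by nlinarith
  have e : ∑' n : ℕ, (catalan n : ℝ) * (p*q) ^ (n+1)
      = (p*q) * ∑' n : ℕ, (catalan n : ℝ) * (p*q) ^ n := by
    rw [← tsum_mul_left]; apply tsum_congr; intro n; rw [pow_succ]; ring
  rw [e, tsum_cat_eq hq0 hq hp]
  field_simp

lemma summable_wcat : Summable (fun n : ℕ => ((n:ℝ)+2) * (catalan n : ℝ) * (p*q) ^ (n+1)) := by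
  refine (((summable_ncat hq0 hq hp).add (summable_cat hq0 hq hp)).mul_left (p*q)).congr
    fun n => ?_
  rw [pow_succ]; ring

lemma tsum_wcat : ∑' n : ℕ, ((n:ℝ)+2) * (catalan n : ℝ) * (p*q) ^ (n+1)
    = q + p*q/(p-q) := by
  have hp0 : (0:ℝ) < p := by nlinarith
  have hpq : (0:ℝ) < p - q := by nlinarith
  have e : ∑' n : ℕ, ((n:ℝ)+2) * (catalan n : ℝ) * (p*q) ^ (n+1)
      = (p*q) * ∑' n : ℕ, (((n:ℝ)+1) * (catalan n : ℝ) * (p*q) ^ n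
          + (catalan n : ℝ) * (p*q) ^ n) := by
    rw [← tsum_mul_left]; apply tsum_congr; intro n; rw [pow_succ]; ring
  rw [e, Summable.tsum_add (summable_ncat hq0 hq hp) (summable_cat hq0 hq hp),
    tsum_ncat_eq hq0 hq hp, tsum_cat_eq hq0 hq hp]
  field_simp
  ring

end

def bval (b : Bool) : ℤ := if b = true then 1 else -1

lemma walkW_eq_sum (ω : ℕ → Bool) (k : ℕ) :
    walkW ω k = ∑ i ∈ Finset.range k, bval (ω i) := by
  unfold walkW bval
  rw [Finset.sum_ite, Finset.sum_const, Finset.sum_const]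
  have : (Finset.range k).filter (fun i => ¬(ω i = true))
      = (Finset.range k).filter (fun i => ω i = false) := by
    apply Finset.filter_congr
    intro i _
    simp
  rw [this]
  simp [nsmul_eq_mul]
  ring

lemma walkW_succ (ω : ℕ → Bool) (k : ℕ) :
    walkW ω (k+1) = walkW ω k + bval (ω k) := by
  rw [walkW_eq_sum, walkW_eq_sum, Finset.sum_range_succ]

lemma walkW_congr {ω ω' : ℕ → Bool} {k : ℕ} (h : ∀ i, i < k → ω i = ω' i) :
    walkW ω k = walkW ω' k := by
  rw [walkW_eq_sum, walkW_eq_sum]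
  exact Finset.sum_congr rfl fun i hi => by rw [h i (Finset.mem_range.mp hi)]

lemma bval_cases (b : Bool) : bval b = 1 ∨ bval b = -1 := by
  cases b <;> simp [bval]

lemma walkW_add_card (ω : ℕ → Bool) (k : ℕ) :
    walkW ω k + k = 2 * (((Finset.range k).filter fun i => ω i = true).card : ℤ) := by
  unfold walkW
  have := Finset.card_filter_add_card_filter_not
    (s := Finset.range k) (p := fun i => ω i = true)
  have h2 : (Finset.range k).filter (fun i => ¬(ω i = true))
      = (Finset.range k).filter (fun i => ω i = false) := by
    apply Finset.filter_congr
    intro i _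
    simp
  rw [h2] at this
  rw [Finset.card_range] at this
  have : (((Finset.range k).filter fun i => ω i = true).card : ℤ)
      + (((Finset.range k).filter fun i => ω i = false).card : ℤ) = (k : ℤ) := by
    exact_mod_cast congrArg (Nat.cast : ℕ → ℤ) this
  omega

lemma walkW_zero_even {ω : ℕ → Bool} {k : ℕ} (h : walkW ω k = 0) :
    k = 2 * (((Finset.range k).filter fun i => ω i = true).card) := by
  have := walkW_add_card ω k
  rw [h] at this
  omega

/-- The event that the cycle has the honest first block. -/
def E0 : Set (ℕ → Bool) := {ω | ω 0 = false}

/-- The event that the first block is selfish and the walk first returns to 0 at time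
`2 * m + 2`. -/
def Aev (m : ℕ) : Set (ℕ → Bool) :=
  {ω | ω 0 = true ∧ walkW ω (2*m+2) = 0 ∧ ∀ k, 1 ≤ k → k < 2*m+2 → walkW ω k ≠ 0}

lemma walkW_pos {ω : ℕ → Bool} {n : ℕ} (h0 : ω 0 = true)
    (hne : ∀ k, 1 ≤ k → k < n → walkW ω k ≠ 0) :
    ∀ k, 1 ≤ k → k < n → 1 ≤ walkW ω k := by
  intro k
  induction k with
  | zero => omega
  | succ k ih =>
    intro _ hk
    by_cases hk1 : k = 0
    · subst hk1
      rw [show (0:ℕ)+1 = 1 from rfl, show (1:ℕ) = 0 + 1 from rfl, walkW_succ]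
      simp [walkW, bval, h0]
    · have h1 := ih (by omega) (by omega)
      have h2 := hne (k+1) (by omega) hk
      rw [walkW_succ] at h2 ⊢
      rcases bval_cases (ω k) with h | h <;> omega

lemma lsmL_of_E0 {ω : ℕ → Bool} (h : ω ∈ E0) : lsmL ω = 1 := by
  rw [lsmL, if_pos (show ω 0 = false from h)]

lemma lsmL_of_Aev {ω : ℕ → Bool} {m : ℕ} (h : ω ∈ Aev m) : lsmL ω = ((m + 2 : ℕ) : ℕ∞) := by
  obtain ⟨h0, hz, hne⟩ := h
  have hmem : (2*m+2) ∈ {k : ℕ | 1 ≤ k ∧ walkW ω k = 0} := ⟨by omega, hz⟩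
  rw [lsmL, if_neg (by simp [h0]), dif_pos ⟨_, hmem⟩]
  have hinf : sInf {k : ℕ | 1 ≤ k ∧ walkW ω k = 0} = 2*m+2 := by
    apply le_antisymm (Nat.sInf_le hmem)
    apply le_csInf ⟨_, hmem⟩
    intro b hb
    by_contra hlt
    exact hne b hb.1 (by omega) hb.2
  rw [hinf]
  have he : (2*m+2)/2 + 1 = m + 2 := by omega
  rw [he]

lemma lsmL_of_none {ω : ℕ → Bool} (h0 : ω 0 = true) (h : ∀ m, ω ∉ Aev m) :
    lsmL ω = ⊤ := by
  rw [lsmL, if_neg (by simp [h0]), dif_neg]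
  rintro ⟨r0, hr⟩
  set S := {k : ℕ | 1 ≤ k ∧ walkW ω k = 0}
  have hne : S.Nonempty := ⟨r0, hr⟩
  have hmem := Nat.sInf_mem hne
  set r := sInf S with hrdef
  obtain ⟨hr1, hrz⟩ := hmem
  have heven := walkW_zero_even hrz
  have hr2 : 2 ≤ r := by omega
  set m := (r - 2) / 2 with hm
  have hrm : r = 2*m+2 := by omega
  apply h m
  refine ⟨h0, by rw [← hrm]; exact hrz, ?_⟩
  intro k hk1 hk2 hkz
  have : k ∈ S := ⟨hk1, hkz⟩
  have := Nat.sInf_le this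
  omega

lemma lsmL_lt_top_iff (ω : ℕ → Bool) :
    lsmL ω < ⊤ ↔ ω ∈ E0 ∪ ⋃ m, Aev m := by
  constructor
  · intro h
    by_contra hc
    simp only [Set.mem_union, Set.mem_iUnion, not_or, not_exists] at hc
    have h0 : ω 0 = true := by
      have := hc.1
      simp only [E0, Set.mem_setOf_eq, Bool.not_eq_false] at this
      exact this
    rw [lsmL_of_none h0 hc.2] at h
    exact absurd h (lt_irrefl _)
  · rintro (h | h)
    · rw [lsmL_of_E0 h]
      exact lt_top_iff_ne_top.mpr (by simp)
    · obtain ⟨m, hm⟩ := Set.mem_iUnion.mp h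
      rw [lsmL_of_Aev hm]
      exact ENat.coe_lt_top _

/-- Extend a finite word to an infinite one by `false`. -/
def extw (n : ℕ) (w : Fin n → Bool) : ℕ → Bool :=
  fun i => if h : i < n then w ⟨i, h⟩ else false

def cylSet (n : ℕ) (w : Fin n → Bool) : Set (ℕ → Bool) := {ω | ∀ i : Fin n, ω i = w i}

lemma measurableSet_coord (i : ℕ) (b : Bool) : MeasurableSet {ω : ℕ → Bool | ω i = b} := by
  have : {ω : ℕ → Bool | ω i = b} = (fun ω : ℕ → Bool => ω i) ⁻¹' {b} := by
    ext ω; simp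
  rw [this]
  exact measurable_pi_apply i (measurableSet_singleton b)

lemma measurableSet_cyl (n : ℕ) (w : Fin n → Bool) : MeasurableSet (cylSet n w) := by
  have : cylSet n w = ⋂ i : Fin n, {ω : ℕ → Bool | ω i = w i} := by
    ext ω; simp [cylSet, Set.mem_iInter]
  rw [this]
  exact MeasurableSet.iInter fun i => measurableSet_coord i (w i)

lemma measurable_walkW (k : ℕ) : Measurable (fun ω : ℕ → Bool => walkW ω k) := by
  have : (fun ω : ℕ → Bool => walkW ω k)
      = fun ω => ∑ i ∈ Finset.range k, bval (ω i) := by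
    funext ω; exact walkW_eq_sum ω k
  rw [this]
  exact Finset.measurable_sum _ fun i _ =>
    (Measurable.of_discrete (f := bval)).comp (measurable_pi_apply i)

lemma measurableSet_E0 : MeasurableSet E0 := measurableSet_coord 0 false

lemma measurableSet_Aev (m : ℕ) : MeasurableSet (Aev m) := by
  have : Aev m = {ω : ℕ → Bool | ω 0 = true}
      ∩ ((fun ω => walkW ω (2*m+2)) ⁻¹' {0})
      ∩ ⋂ (k : ℕ), ⋂ (_ : 1 ≤ k), ⋂ (_ : k < 2*m+2),
          ((fun ω => walkW ω k) ⁻¹' {0})ᶜ := by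
    ext ω
    simp [Aev, Set.mem_iInter]
    tauto
  rw [this]
  refine (((measurableSet_coord 0 true).inter
    ((measurable_walkW _) (measurableSet_singleton 0))).inter ?_)
  exact MeasurableSet.iInter fun k => MeasurableSet.iInter fun _ =>
    MeasurableSet.iInter fun _ => ((measurable_walkW _) (measurableSet_singleton 0)).compl

lemma cyl_disjoint {n : ℕ} {w w' : Fin n → Bool} (h : w ≠ w') :
    Disjoint (cylSet n w) (cylSet n w') := by
  rw [Set.disjoint_left]
  intro ω h1 h2
  apply h
  funext i
  exact (h1 i).symm.trans (h2 i)

lemma cyl_decomp (n : ℕ) (E : Set (ℕ → Bool))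
    (hE : ∀ ω ω', (∀ i, i < n → ω i = ω' i) → ω ∈ E → ω' ∈ E) :
    E = ⋃ w ∈ Finset.univ.filter (fun w : Fin n → Bool => extw n w ∈ E), cylSet n w := by
  ext ω
  simp only [Set.mem_iUnion, Finset.mem_filter, Finset.mem_univ, true_and, exists_prop]
  constructor
  · intro hω
    refine ⟨fun i => ω i, ?_, fun i => rfl⟩
    apply hE ω _ _ hω
    intro i hi
    simp [extw, hi]
  · rintro ⟨w, hw, hcyl⟩
    apply hE (extw n w) ω _ hw
    intro i hi
    rw [extw]
    simp only [hi, dif_pos]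
    exact (hcyl ⟨i, hi⟩).symm

lemma card_true_add_card_false (ω : ℕ → Bool) (k : ℕ) :
    ((Finset.range k).filter fun i => ω i = true).card
      + ((Finset.range k).filter fun i => ω i = false).card = k := by
  have h := Finset.card_filter_add_card_filter_not
    (s := Finset.range k) (p := fun i => ω i = true)
  have h2 : (Finset.range k).filter (fun i => ¬(ω i = true))
      = (Finset.range k).filter (fun i => ω i = false) := by
    apply Finset.filter_congr
    intro i _
    simp
  rw [h2, Finset.card_range] at h
  exact h

lemma counts_of_walk_zero {ω : ℕ → Bool} {m : ℕ} (h : walkW ω (2*m+2) = 0) :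
    ((Finset.range (2*m+2)).filter fun i => ω i = true).card = m+1
    ∧ ((Finset.range (2*m+2)).filter fun i => ω i = false).card = m+1 := by
  have h1 := walkW_zero_even h
  have h2 := card_true_add_card_false ω (2*m+2)
  omega

section Meas

variable (q p : ℝ) (μ : Measure (ℕ → Bool)) [IsProbabilityMeasure μ]
  (hμ : ∀ (n : ℕ) (w : Fin n → Bool),
    μ {ω | ∀ i : Fin n, ω i = w i} =
      ∏ i : Fin n, (if w i then ENNReal.ofReal q else ENNReal.ofReal p))

include hμ

lemma measure_of_cylinders (n : ℕ) (E : Set (ℕ → Bool))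
    (hE : ∀ ω ω', (∀ i, i < n → ω i = ω' i) → ω ∈ E → ω' ∈ E) :
    μ E = ∑ w ∈ Finset.univ.filter (fun w : Fin n → Bool => extw n w ∈ E),
      ∏ i : Fin n, (if w i then ENNReal.ofReal q else ENNReal.ofReal p) := by
  conv_lhs => rw [cyl_decomp n E hE]
  rw [measure_biUnion_finset]
  · exact Finset.sum_congr rfl fun w _ => hμ n w
  · intro w _ w' _ hww'
    exact cyl_disjoint hww'
  · exact fun w _ => measurableSet_cyl n w

lemma measure_E0 : μ E0 = ENNReal.ofReal p := by
  have h := hμ 1 (fun _ => false)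
  have e : {ω : ℕ → Bool | ∀ i : Fin 1, ω i = (fun _ => false) i} = E0 := by
    ext ω
    constructor
    · intro hω
      exact hω 0
    · intro hω i
      have : (i : ℕ) = 0 := by omega
      rw [this]
      exact hω
  rw [e] at h
  rw [h]
  simp

end Meas

lemma prod_ite_count (n : ℕ) (w : Fin n → Bool) (Q P : ℝ≥0∞) :
    ∏ i : Fin n, (if w i then Q else P) =
      Q ^ ((Finset.range n).filter (fun i => extw n w i = true)).card *
      P ^ ((Finset.range n).filter (fun i => extw n w i = false)).card := by
  have e1 : ∀ i : Fin n, (if w i then Q else P) = (if extw n w (i : ℕ) then Q else P) := by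
    intro i
    have : extw n w (i : ℕ) = w i := by
      rw [extw]
      simp only [i.isLt, dif_pos]
    rw [this]
  rw [Finset.prod_congr rfl (fun i _ => e1 i),
    Fin.prod_univ_eq_prod_range (fun i => if extw n w i then Q else P) n,
    Finset.prod_ite, Finset.prod_const, Finset.prod_const]
  congr 2
  congr 1
  apply Finset.filter_congr
  intro i _
  simp

lemma Aev_determined (m : ℕ) : ∀ ω ω', (∀ i, i < 2*m+2 → ω i = ω' i) →
    ω ∈ Aev m → ω' ∈ Aev m := by
  rintro ω ω' hagree ⟨h0, hz, hne⟩
  refine ⟨by rw [← hagree 0 (by omega)]; exact h0, ?_, ?_⟩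
  · rw [← walkW_congr (fun i hi => hagree i hi)]
    exact hz
  · intro k hk1 hk2
    rw [← walkW_congr (fun i hi => hagree i (by omega))]
    exact hne k hk1 hk2

/-- The finite words of length `2m+2` tracing out a first-return-at-the-end excursion. -/
noncomputable def Sm (m : ℕ) : Finset (Fin (2*m+2) → Bool) :=
  Finset.univ.filter (fun w => extw (2*m+2) w ∈ Aev m)

lemma measure_Aev (q p : ℝ) (μ : Measure (ℕ → Bool)) [IsProbabilityMeasure μ]
    (hμ : ∀ (n : ℕ) (w : Fin n → Bool),
      μ {ω | ∀ i : Fin n, ω i = w i} =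
        ∏ i : Fin n, (if w i then ENNReal.ofReal q else ENNReal.ofReal p)) (m : ℕ) :
    μ (Aev m) = ((Sm m).card : ℝ≥0∞)
      * (ENNReal.ofReal q)^(m+1) * (ENNReal.ofReal p)^(m+1) := by
  rw [measure_of_cylinders q p μ hμ (2*m+2) (Aev m) (Aev_determined m)]
  have hval : ∀ w ∈ Sm m, ∏ i : Fin (2*m+2), (if w i then ENNReal.ofReal q else ENNReal.ofReal p)
      = (ENNReal.ofReal q)^(m+1) * (ENNReal.ofReal p)^(m+1) := by
    intro w hw
    have hz : walkW (extw (2*m+2) w) (2*m+2) = 0 :=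
      ((Finset.mem_filter.mp hw).2).2.1
    obtain ⟨hT, hF⟩ := counts_of_walk_zero hz
    rw [prod_ite_count, hT, hF]
  rw [show Finset.univ.filter (fun w : Fin (2*m+2) → Bool => extw (2*m+2) w ∈ Aev m) = Sm m
    from rfl]
  rw [Finset.sum_congr rfl hval, Finset.sum_const, nsmul_eq_mul, mul_assoc]

open DyckStep

def sOf (b : Bool) : DyckStep := if b then U else D

def boolOf (s : DyckStep) : Bool := s = U

lemma sOf_boolOf (s : DyckStep) : sOf (boolOf s) = s := by cases s <;> rfl

lemma boolOf_sOf (b : Bool) : boolOf (sOf b) = b := by cases b <;> rfl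

/-- Signed count of a list of Dyck steps. -/
def dval (l : List DyckStep) : ℤ := (l.count U : ℤ) - (l.count D : ℤ)

lemma dval_nil : dval [] = 0 := rfl

lemma count_U_add_count_D (l : List DyckStep) : l.count U + l.count D = l.length := by
  induction l with
  | nil => rfl
  | cons s t ih =>
    cases s <;> simp [List.count_cons, ih] <;> omega

lemma dval_concat (l : List DyckStep) (s : DyckStep) :
    dval (l ++ [s]) = dval l + bval (boolOf s) := by
  cases s <;> simp [dval, List.count_append, bval, boolOf] <;> ring

lemma walkW_zero (ω : ℕ → Bool) : walkW ω 0 = 0 := by simp [walkW]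

lemma walk_list (ω : ℕ → Bool) (M : List DyckStep) (h0 : ω 0 = true)
    (hcomp : ∀ (j : ℕ) (h : j < M.length), M[j] = sOf (ω (j+1))) :
    ∀ j, j ≤ M.length → dval (M.take j) = walkW ω (j+1) - 1 := by
  intro j
  induction j with
  | zero =>
    intro _
    rw [List.take_zero, dval_nil, show (0:ℕ)+1 = 0+1 from rfl, walkW_succ, walkW_zero]
    simp [bval, h0]
  | succ j ih =>
    intro hj
    have hjl : j < M.length := by omega
    rw [← List.take_concat_get' M j hjl, dval_concat, ih (by omega), hcomp j hjl,
      boolOf_sOf, walkW_succ ω (j+1)]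
    ring

/-- The infinite word associated to a Dyck word: `true`, then the Dyck word, then `false`s. -/
def ωd (pw : DyckWord) : ℕ → Bool := fun i =>
  if h : 1 ≤ i ∧ i ≤ pw.toList.length then boolOf (pw.toList[i-1]'(by omega))
  else decide (i = 0)

lemma ωd_zero (pw : DyckWord) : ωd pw 0 = true := by simp [ωd]

lemma ωd_mid (pw : DyckWord) (i : ℕ) (h1 : 1 ≤ i) (h2 : i ≤ pw.toList.length) :
    ωd pw i = boolOf (pw.toList[i-1]'(by omega)) := by
  rw [ωd, dif_pos ⟨h1, h2⟩]

lemma ωd_late (pw : DyckWord) (i : ℕ) (h : pw.toList.length < i) : ωd pw i = false := by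
  rw [ωd, dif_neg (by omega)]
  simp
  omega

lemma ωd_walk (pw : DyckWord) :
    ∀ j, j ≤ pw.toList.length → dval (pw.toList.take j) = walkW (ωd pw) (j+1) - 1 := by
  apply walk_list _ _ (ωd_zero pw)
  intro j hj
  rw [ωd_mid pw (j+1) (by omega) (by omega)]
  simp only [Nat.add_sub_cancel]
  rw [sOf_boolOf]

lemma ωd_walk_pos (pw : DyckWord) (k : ℕ) (h1 : 1 ≤ k) (h2 : k ≤ pw.toList.length + 1) :
    1 ≤ walkW (ωd pw) k := by
  obtain ⟨j, rfl⟩ : ∃ j, k = j + 1 := ⟨k - 1, by omega⟩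
  have := ωd_walk pw j (by omega)
  have hd : 0 ≤ dval (pw.toList.take j) := by
    have := pw.count_D_le_count_U j
    unfold dval
    omega
  omega

lemma ωd_walk_end (pw : DyckWord) : walkW (ωd pw) (pw.toList.length + 2) = 0 := by
  have h1 : walkW (ωd pw) (pw.toList.length + 1) = 1 := by
    have := ωd_walk pw pw.toList.length (le_refl _)
    rw [List.take_length] at this
    have hb : dval pw.toList = 0 := by
      unfold dval
      rw [pw.count_U_eq_count_D]
      ring
    omega
  rw [show pw.toList.length + 2 = (pw.toList.length + 1) + 1 from rfl, walkW_succ, h1,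
    ωd_late pw _ (by omega)]
  simp [bval]

lemma ωd_mem_Aev {pw : DyckWord} {m : ℕ} (hm : pw.semilength = m) : ωd pw ∈ Aev m := by
  have hlen : pw.toList.length = 2 * m := by
    have := pw.two_mul_semilength_eq_length
    omega
  refine ⟨ωd_zero pw, ?_, ?_⟩
  · have := ωd_walk_end pw
    rw [hlen] at this
    exact this
  · intro k hk1 hk2
    have := ωd_walk_pos pw k hk1 (by omega)
    omega

section Backward

variable {ω : ℕ → Bool} {m : ℕ}

/-- The middle part of an excursion, as a list of Dyck steps. -/
def midList (ω : ℕ → Bool) (m : ℕ) : List DyckStep :=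
  List.ofFn (fun j : Fin (2*m) => sOf (ω ((j:ℕ)+1)))

lemma midList_length : (midList ω m).length = 2*m := by
  simp [midList]

lemma midList_getElem (j : ℕ) (h : j < (midList ω m).length) :
    (midList ω m)[j] = sOf (ω (j+1)) := by
  simp [midList]

variable (hω : ω ∈ Aev m)
include hω

lemma Aev_walk : ∀ j, j ≤ 2*m → dval ((midList ω m).take j) = walkW ω (j+1) - 1 := by
  intro j hj
  exact walk_list ω (midList ω m) hω.1 (fun j h => midList_getElem j h) j
    (by rw [midList_length]; omega)

lemma Aev_pos : ∀ k, 1 ≤ k → k ≤ 2*m+1 → 1 ≤ walkW ω k := by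
  intro k h1 h2
  exact walkW_pos hω.1 hω.2.2 k h1 (by omega)

lemma Aev_penult : walkW ω (2*m+1) = 1 ∧ ω (2*m+1) = false := by
  have hz := hω.2.1
  have hpos := Aev_pos hω (2*m+1) (by omega) (le_refl _)
  have hstep : walkW ω (2*m+2) = walkW ω (2*m+1) + bval (ω (2*m+1)) := walkW_succ ω (2*m+1)
  rcases bval_cases (ω (2*m+1)) with h | h
  · omega
  · constructor
    · omega
    · cases hb : ω (2*m+1)
      · rfl
      · rw [hb] at h; simp [bval] at h

lemma Aev_bal : (midList ω m).count U = (midList ω m).count D := by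
  have h1 := Aev_walk hω (2*m) (le_refl _)
  rw [show (2*m) + 1 = 2*m+1 from rfl, (Aev_penult hω).1] at h1
  have h2 : (midList ω m).take (2*m) = midList ω m :=
    List.take_of_length_le (by rw [midList_length])
  rw [h2] at h1
  unfold dval at h1
  omega

lemma Aev_nonneg : ∀ i, ((midList ω m).take i).count D ≤ ((midList ω m).take i).count U := by
  intro i
  rcases le_or_gt i (2*m) with hi | hi
  · have h1 := Aev_walk hω i hi
    have h2 := Aev_pos hω (i+1) (by omega) (by omega)
    unfold dval at h1
    omega
  · rw [List.take_of_length_le (by rw [midList_length]; omega)]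
    rw [Aev_bal hω]

/-- The Dyck word extracted from an excursion. -/
def dwOf : DyckWord :=
  ⟨midList ω m, Aev_bal hω, Aev_nonneg hω⟩

lemma dwOf_semilength : (dwOf hω).semilength = m := by
  have h1 := count_U_add_count_D (midList ω m)
  rw [midList_length] at h1
  have h2 := Aev_bal hω
  unfold DyckWord.semilength dwOf
  simp only
  omega

end Backward

lemma extw_ωd (pw : DyckWord) (m : ℕ) (hm : pw.semilength = m) :
    extw (2*m+2) (fun i : Fin (2*m+2) => ωd pw i) = ωd pw := by
  have hlen : pw.toList.length = 2*m := by
    have := pw.two_mul_semilength_eq_length; omega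
  funext i
  rw [extw]
  by_cases h : i < 2*m+2
  · simp only [h, dif_pos]
  · rw [dif_neg h, ωd_late pw i (by omega)]

noncomputable def dyckEquiv (m : ℕ) :
    {p : DyckWord // p.semilength = m} ≃ {w : Fin (2*m+2) → Bool // w ∈ Sm m} where
  toFun := fun p => ⟨fun i => ωd p.1 i, by
    rw [Sm, Finset.mem_filter]
    refine ⟨Finset.mem_univ _, ?_⟩
    rw [extw_ωd p.1 m p.2]
    exact ωd_mem_Aev p.2⟩
  invFun := fun w => ⟨dwOf (show extw (2*m+2) w.1 ∈ Aev m from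
      (Finset.mem_filter.mp w.2).2), dwOf_semilength _⟩
  left_inv := by
    rintro ⟨pw, hm⟩
    have hlen : pw.toList.length = 2*m := by
      have := pw.two_mul_semilength_eq_length; omega
    apply Subtype.ext
    apply DyckWord.ext
    show midList (extw (2*m+2) fun i : Fin (2*m+2) => ωd pw i) m = pw.toList
    rw [extw_ωd pw m hm]
    apply List.ext_getElem (by rw [midList_length, hlen])
    intro j h1 h2
    rw [midList_getElem j h1, ωd_mid pw (j+1) (by omega) (by omega)]
    simp only [Nat.add_sub_cancel]
    rw [sOf_boolOf]
  right_inv := by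
    rintro ⟨w, hw⟩
    have hω : extw (2*m+2) w ∈ Aev m := (Finset.mem_filter.mp hw).2
    apply Subtype.ext
    funext i
    have hwi : extw (2*m+2) w (i : ℕ) = w i := dif_pos i.isLt
    show ωd (dwOf hω) (i : ℕ) = w i
    rw [← hwi]
    set ω := extw (2*m+2) w with hωdef
    have hlen : (dwOf hω).toList.length = 2*m := midList_length
    have hn : (i : ℕ) < 2*m+2 := i.isLt
    rcases Nat.eq_zero_or_pos (i : ℕ) with h0 | hpos
    · rw [h0, ωd_zero]
      exact (hω.1).symm
    · rcases le_or_gt (i : ℕ) (2*m) with hle | hgt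
      · rw [ωd_mid (dwOf hω) (i : ℕ) hpos (by rw [hlen]; omega)]
        have hmid : (dwOf hω).toList[(i:ℕ)-1]'(by omega) = sOf (ω (((i:ℕ)-1)+1)) :=
          midList_getElem ((i:ℕ)-1) (by rw [midList_length]; omega)
        rw [hmid, boolOf_sOf]
        congr 1
        omega
      · have hi1 : (i : ℕ) = 2*m+1 := by omega
        rw [hi1, ωd_late (dwOf hω) (2*m+1) (by rw [hlen]; omega)]
        exact ((Aev_penult hω).2).symm

lemma card_Sm (m : ℕ) : (Sm m).card = catalan m := by
  rw [← DyckWord.card_dyckWord_semilength_eq_catalan m, ← Fintype.card_coe (Sm m)]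
  exact Fintype.card_congr (dyckEquiv m).symm

lemma Aev_disj {m m' : ℕ} (h : m ≠ m') : Disjoint (Aev m) (Aev m') := by
  wlog hlt : m < m' generalizing m m'
  · exact (this h.symm (by omega)).symm
  rw [Set.disjoint_left]
  rintro ω ⟨_, hz, _⟩ ⟨_, _, hne'⟩
  exact hne' (2*m+2) (by omega) (by omega) hz

lemma E0_Aev_disj (m : ℕ) : Disjoint E0 (Aev m) := by
  rw [Set.disjoint_left]
  rintro ω h1 ⟨h0, _, _⟩
  have h1' : ω 0 = false := h1
  rw [h1'] at h0
  exact absurd h0 (by simp)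

set_option maxHeartbeats 1000000 in
/-- The Lead Stubborn Mining cycle length is almost surely finite and its expectation is
`E[L] = (p - q + pq) / (p - q)`. -/
theorem lsmL_finite_and_expectation (q p : ℝ) (hq0 : 0 < q) (hq : q < 1 / 2)
    (hp : p = 1 - q)
    (μ : Measure (ℕ → Bool)) [IsProbabilityMeasure μ]
    (hμ : ∀ (n : ℕ) (w : Fin n → Bool),
      μ {ω | ∀ i : Fin n, ω i = w i} =
        ∏ i : Fin n, (if w i then ENNReal.ofReal q else ENNReal.ofReal p)) :
    μ {ω | lsmL ω < ⊤} = 1 ∧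
    ∫⁻ ω, (lsmL ω : ℝ≥0∞) ∂μ = ENNReal.ofReal ((p - q + p * q) / (p - q)) := by
  have hp0 : (0:ℝ) < p := by nlinarith
  have hpq : (0:ℝ) < p - q := by nlinarith
  -- the partition
  set B : ℕ → Set (ℕ → Bool) := fun n => Nat.casesOn n E0 Aev with hB
  have hBmeas : ∀ n, MeasurableSet (B n) := by
    intro n
    cases n with
    | zero => exact measurableSet_E0
    | succ m => exact measurableSet_Aev m
  have hBdisj : Pairwise (Function.onFun Disjoint B) := by
    intro i j hij
    match i, j with
    | 0, 0 => omega
    | 0, (m+1) => exact E0_Aev_disj m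
    | (m+1), 0 => exact (E0_Aev_disj m).symm
    | (m+1), (m'+1) => exact Aev_disj (by omega)
  have hUeq : {ω | lsmL ω < ⊤} = ⋃ n, B n := by
    ext ω
    rw [Set.mem_setOf_eq, lsmL_lt_top_iff]
    constructor
    · rintro (h | h)
      · exact Set.mem_iUnion.mpr ⟨0, h⟩
      · obtain ⟨m, hm⟩ := Set.mem_iUnion.mp h
        exact Set.mem_iUnion.mpr ⟨m+1, hm⟩
    · intro h
      obtain ⟨n, hn⟩ := Set.mem_iUnion.mp h
      cases n with
      | zero => exact Or.inl hn
      | succ m => exact Or.inr (Set.mem_iUnion.mpr ⟨m, hn⟩)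
  -- measures of the pieces
  have hμE0 : μ E0 = ENNReal.ofReal p := measure_E0 q p μ hμ
  have hμA : ∀ m, μ (Aev m) = ENNReal.ofReal ((catalan m : ℝ) * (p*q)^(m+1)) := by
    intro m
    rw [measure_Aev q p μ hμ m, card_Sm m]
    rw [← ENNReal.ofReal_natCast (catalan m),
      ← ENNReal.ofReal_pow hq0.le, ← ENNReal.ofReal_pow hp0.le,
      ← ENNReal.ofReal_mul (by positivity), ← ENNReal.ofReal_mul (by positivity)]
    congr 1
    rw [mul_pow]
    ring
  have hμU : μ (⋃ n, B n) = 1 := by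
    rw [measure_iUnion hBdisj hBmeas, tsum_eq_zero_add' (f := fun n => μ (B n)) ENNReal.summable]
    have h0 : μ (B 0) = ENNReal.ofReal p := hμE0
    have hs : ∑' m : ℕ, μ (B (m+1)) = ENNReal.ofReal q := by
      have : ∀ m : ℕ, μ (B (m+1)) = ENNReal.ofReal ((catalan m : ℝ) * (p*q)^(m+1)) :=
        fun m => hμA m
      rw [tsum_congr this, ← ENNReal.ofReal_tsum_of_nonneg
        (fun m => by positivity) (summable_cat_shift hq0 hq hp),
        tsum_cat_shift hq0 hq hp]
    rw [h0, hs, ← ENNReal.ofReal_add hp0.le hq0.le]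
    rw [show p + q = 1 by linarith, ENNReal.ofReal_one]
  constructor
  · rw [hUeq]; exact hμU
  · -- the lintegral
    have hUmeas : MeasurableSet (⋃ n, B n) := MeasurableSet.iUnion hBmeas
    have hcompl : μ (⋃ n, B n)ᶜ = 0 := by
      rw [measure_compl hUmeas (measure_ne_top μ _), hμU, measure_univ, tsub_self]
    rw [← lintegral_add_compl (fun ω => ((lsmL ω : ℝ≥0∞))) hUmeas,
      Measure.restrict_eq_zero.mpr hcompl, lintegral_zero_measure, add_zero,
      lintegral_iUnion hBmeas hBdisj]
    have hpiece0 : ∫⁻ ω in B 0, (lsmL ω : ℝ≥0∞) ∂μ = ENNReal.ofReal p := by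
      have hconst : ∫⁻ ω in B 0, (lsmL ω : ℝ≥0∞) ∂μ = ∫⁻ _ω in B 0, 1 ∂μ :=
        setLIntegral_congr_fun (hBmeas 0) (fun ω hω => by
          rw [lsmL_of_E0 (show ω ∈ E0 from hω), ENat.toENNReal_one])
      rw [hconst, setLIntegral_const, one_mul]
      exact hμE0
    have hpiece : ∀ m : ℕ, ∫⁻ ω in B (m+1), (lsmL ω : ℝ≥0∞) ∂μ
        = ENNReal.ofReal (((m:ℝ)+2) * ((catalan m : ℝ) * (p*q)^(m+1))) := by
      intro m
      have hconst : ∫⁻ ω in B (m+1), (lsmL ω : ℝ≥0∞) ∂μ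
          = ∫⁻ _ω in B (m+1), (((m+2:ℕ) : ℝ≥0∞)) ∂μ :=
        setLIntegral_congr_fun (hBmeas (m+1)) (fun ω hω => by
          rw [lsmL_of_Aev (show ω ∈ Aev m from hω), ENat.toENNReal_coe])
      rw [hconst, setLIntegral_const]
      show ((m+2:ℕ) : ℝ≥0∞) * μ (Aev m) = _
      rw [hμA m, ← ENNReal.ofReal_natCast (m+2), ← ENNReal.ofReal_mul (by positivity)]
      congr 1
      push_cast
      ring
    have hsummable : Summable (fun m : ℕ => ((m:ℝ)+2) * ((catalan m : ℝ) * (p*q)^(m+1))) :=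
      (summable_wcat hq0 hq hp).congr fun m => by ring
    have hnn2 : (0:ℝ) ≤ q + p*q/(p-q) :=
      add_nonneg hq0.le (div_nonneg (mul_nonneg hp0.le hq0.le) hpq.le)
    have hsum2 : ∑' m : ℕ, ENNReal.ofReal (((m:ℝ)+2) * ((catalan m : ℝ) * (p*q)^(m+1)))
        = ENNReal.ofReal (q + p*q/(p-q)) := by
      rw [← ENNReal.ofReal_tsum_of_nonneg (fun m => by positivity) hsummable]
      congr 1
      rw [← tsum_wcat hq0 hq hp]
      exact tsum_congr fun m => by ring
    rw [tsum_eq_zero_add' (f := fun n => ∫⁻ ω in B n, (lsmL ω : ℝ≥0∞) ∂μ) ENNReal.summable,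
      hpiece0, tsum_congr hpiece, hsum2, ← ENNReal.ofReal_add hp0.le hnn2]
    congr 1
    field_simp
    linear_combination (p-q)*hp
end

section
/- Let q be real with 0 < q < 1/2, p = 1 − q, and γ ∈ (0,1]. Then ( ∑_{n=1}^∞ (pq)^n·C_{n−1}·( n + q − (p(1−γ)/γ)·(1 − (1−γ)^n) ) ) / ( (p − q + pq)/(p − q) ) = q(p + pq − q²)/(p + pq − q) − (pq(p − q)(1 − γ)/γ)·( 1 − p(1−γ)·Ĉ((1−γ)pq) )/(p + pq − q). Here the numerator is the expected number E[Z] of attacker blocks in the official chain per Lead Stubborn Mining cycle (the expected attacker block count on the event {L = n+1} being n + q − (p(1−γ)/γ)(1 − (1−γ)^n)) and (p − q + pq)/(p − q) is E[L], so this is the long-term apparent hashrate of the Lead Stubborn miner. -/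
open scoped BigOperators

/-- The value of the Catalan generating series: `Ĉ(x) = (1 - √(1 - 4x)) / (2x)` for
`x ≠ 0` and `Ĉ(0) = 1`. -/
noncomputable def catalanGF (x : ℝ) : ℝ :=
  if x = 0 then 1 else (1 - Real.sqrt (1 - 4 * x)) / (2 * x)

/-!
Write `f(x) = ∑ Cₙ xⁿ` and `B(x) = ∑ binom(2n, n) xⁿ`. Cauchy products give `x f² + 1 = f`, from
the Catalan recurrence, and `2 x f B + 1 = B`, from `(n + 1) Cₙ = binom(2n, n)` after symmetrising
the convolution. Hence `√(1 - 4x) = 1 - 2 x f(x)` and `B(x) = 1 / √(1 - 4x)` on `[0, 1/4)`. The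
numerator splits as `x B(x) + (q - c) x f(x) + c y f(y)` with `x = pq`, `y = (1 - γ) x`,
`c = p(1 - γ)/γ`, and `√(1 - 4pq) = p - q` makes every term explicit.
-/

open Finset Nat

lemma catalanC_eq_catalan (n : ℕ) : catalanC n = catalan n := by
  have hfact : ((2 * n)! : ℝ) = ((n + 1) * catalan n : ℕ) * n ! * n ! := by
    rw [succ_mul_catalan_eq_centralBinom, centralBinom_eq_two_mul_choose, two_mul]
    exact_mod_cast (Nat.add_choose_mul_factorial_mul_factorial n n).symm
  rw [catalanC, hfact, factorial_succ]
  push_cast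
  field_simp

lemma catalan_le_centralBinom (n : ℕ) : catalan n ≤ centralBinom n :=
  succ_mul_catalan_eq_centralBinom n ▸ Nat.le_mul_of_pos_left _ n.succ_pos

lemma two_mul_sum_antidiagonal_catalan_mul_centralBinom (n : ℕ) :
    2 * ∑ ij ∈ antidiagonal n, catalan ij.1 * centralBinom ij.2 = centralBinom (n + 1) := by
  have hswap : ∑ ij ∈ antidiagonal n, catalan ij.1 * ((ij.2 + 1) * catalan ij.2) =
      ∑ ij ∈ antidiagonal n, (ij.1 + 1) * catalan ij.1 * catalan ij.2 := by
    rw [← Finset.Nat.sum_antidiagonal_swap]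
    exact sum_congr rfl fun ij _ => by simp only [Prod.fst_swap, Prod.snd_swap]; ring
  calc 2 * ∑ ij ∈ antidiagonal n, catalan ij.1 * centralBinom ij.2
      = ∑ ij ∈ antidiagonal n, (ij.1 + ij.2 + 2) * (catalan ij.1 * catalan ij.2) := by
        simp_rw [← succ_mul_catalan_eq_centralBinom]
        rw [two_mul]
        nth_rewrite 2 [hswap]
        rw [← sum_add_distrib]
        exact sum_congr rfl fun ij _ => by ring
    _ = (n + 2) * catalan (n + 1) := by
        rw [catalan_succ', mul_sum]
        exact sum_congr rfl fun ij hij => by rw [← HasAntidiagonal.mem_antidiagonal.1 hij]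
    _ = centralBinom (n + 1) := succ_mul_catalan_eq_centralBinom (n + 1)

section CatalanSeries

variable {x : ℝ}

lemma tsum_mul_tsum_pow_eq_tsum_pow_of_antidiagonal {a b c : ℕ → ℝ}
    (habc : ∀ n, ∑ ij ∈ antidiagonal n, a ij.1 * b ij.2 = c n)
    (ha : Summable fun n => ‖a n * x ^ n‖) (hb : Summable fun n => ‖b n * x ^ n‖) :
    (∑' n, a n * x ^ n) * (∑' n, b n * x ^ n) = ∑' n, c n * x ^ n := by
  rw [tsum_mul_tsum_eq_tsum_sum_antidiagonal_of_summable_norm ha hb]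
  refine tsum_congr fun n => ?_
  rw [← habc, sum_mul]
  refine sum_congr rfl fun ij hij => ?_
  rw [HasAntidiagonal.mem_antidiagonal] at hij
  rw [← hij, pow_add]; ring

lemma summable_norm_centralBinom_mul_pow (hx : |x| < 1 / 4) :
    Summable fun n => ‖(centralBinom n : ℝ) * x ^ n‖ := by
  refine .of_nonneg_of_le (fun _ => norm_nonneg _) (fun n => ?_)
    (summable_geometric_of_lt_one (by positivity) (by linarith : 4 * |x| < 1))
  rw [norm_mul, norm_pow, Real.norm_eq_abs, Real.norm_eq_abs, mul_pow, Nat.abs_cast]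
  gcongr
  exact_mod_cast centralBinom_le_four_pow n

lemma summable_norm_catalan_mul_pow (hx : |x| < 1 / 4) :
    Summable fun n => ‖(catalan n : ℝ) * x ^ n‖ := by
  refine .of_nonneg_of_le (fun _ => norm_nonneg _) (fun n => ?_)
    (summable_norm_centralBinom_mul_pow hx)
  rw [norm_mul, norm_mul]
  gcongr
  rw [Real.norm_natCast, Real.norm_natCast]
  exact_mod_cast catalan_le_centralBinom n

lemma tsum_pow_eq_add_mul_tsum_pow_succ {a : ℕ → ℝ} (ha : Summable fun n => ‖a n * x ^ n‖) :
    ∑' n, a n * x ^ n = a 0 + x * ∑' n, a (n + 1) * x ^ n := by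
  rw [ha.of_norm.tsum_eq_zero_add, ← tsum_mul_left]
  simp only [pow_zero, mul_one, pow_succ]
  congr 1
  exact tsum_congr fun n => by ring

lemma tsum_catalan_mul_pow_sq_mul_add_one (hx : |x| < 1 / 4) :
    x * (∑' n, (catalan n : ℝ) * x ^ n) ^ 2 + 1 = ∑' n, (catalan n : ℝ) * x ^ n := by
  have hC := summable_norm_catalan_mul_pow hx
  rw [sq, tsum_mul_tsum_pow_eq_tsum_pow_of_antidiagonal (c := fun n => (catalan (n + 1) : ℝ))
    (fun n => by rw [catalan_succ']; push_cast; rfl) hC hC,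
    tsum_pow_eq_add_mul_tsum_pow_succ hC]
  simp [add_comm]

lemma two_mul_tsum_catalan_mul_tsum_centralBinom_add_one (hx : |x| < 1 / 4) :
    2 * x * (∑' n, (catalan n : ℝ) * x ^ n) * (∑' n, (centralBinom n : ℝ) * x ^ n) + 1 =
      ∑' n, (centralBinom n : ℝ) * x ^ n := by
  rw [mul_assoc, tsum_mul_tsum_pow_eq_tsum_pow_of_antidiagonal
    (c := fun n => (centralBinom (n + 1) : ℝ) / 2) (fun n => ?_)
    (summable_norm_catalan_mul_pow hx) (summable_norm_centralBinom_mul_pow hx),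
    tsum_pow_eq_add_mul_tsum_pow_succ (summable_norm_centralBinom_mul_pow hx)]
  · simp only [div_mul_eq_mul_div, tsum_div_const, centralBinom_zero, cast_one]
    ring
  · rw [eq_div_iff two_ne_zero, mul_comm]
    exact_mod_cast two_mul_sum_antidiagonal_catalan_mul_centralBinom n

lemma tsum_catalan_mul_pow_mono {y : ℝ} (hx : 0 ≤ x) (hxy : x ≤ y) (hy : y < 1 / 4) :
    ∑' n, (catalan n : ℝ) * x ^ n ≤ ∑' n, (catalan n : ℝ) * y ^ n := by
  refine Summable.tsum_le_tsum (fun n => ?_)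
    (summable_norm_catalan_mul_pow (abs_lt.2 ⟨by linarith, by linarith⟩)).of_norm
    (summable_norm_catalan_mul_pow (abs_lt.2 ⟨by linarith, hy⟩)).of_norm
  gcongr

lemma mul_tsum_catalan_mul_pow_le_half (hx : 0 ≤ x) (hx4 : x < 1 / 4) :
    x * ∑' n, (catalan n : ℝ) * x ^ n ≤ 1 / 2 := by
  by_contra! hlt
  obtain ⟨y, hxy, hy4⟩ := exists_between hx4
  have hfx := tsum_catalan_mul_pow_sq_mul_add_one (x := x) (abs_lt.2 ⟨by linarith, hx4⟩)
  have hfy := tsum_catalan_mul_pow_sq_mul_add_one (x := y) (abs_lt.2 ⟨by linarith, hy4⟩)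
  have hmono := tsum_catalan_mul_pow_mono hx hxy.le hy4
  set fx := ∑' n, (catalan n : ℝ) * x ^ n
  set fy := ∑' n, (catalan n : ℝ) * y ^ n
  -- `s = z f(z)` solves `s ^ 2 - s + z = 0`; were `x f(x) > 1 / 2`, then `s ↦ s ^ 2 - s`, increasing
  -- beyond `1 / 2`, would give `-x ≤ -y`
  have hgrow : x * fx ≤ y * fy := mul_le_mul hxy.le hmono (by nlinarith) (by linarith)
  nlinarith [mul_nonneg (sub_nonneg.2 hgrow) (by linarith : 0 ≤ y * fy + x * fx - 1)]

lemma sqrt_one_sub_four_mul_eq (hx : 0 ≤ x) (hx4 : x < 1 / 4) :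
    √(1 - 4 * x) = 1 - 2 * x * ∑' n, (catalan n : ℝ) * x ^ n := by
  have hf := tsum_catalan_mul_pow_sq_mul_add_one (x := x) (abs_lt.2 ⟨by linarith, hx4⟩)
  have hhalf := mul_tsum_catalan_mul_pow_le_half hx hx4
  rw [Real.sqrt_eq_iff_mul_self_eq (by linarith) (by linarith)]
  linear_combination (-4 * x) * hf

lemma hasSum_catalan_mul_pow_succ (hx : 0 ≤ x) (hx4 : x < 1 / 4) :
    HasSum (fun n => (catalan n : ℝ) * x ^ (n + 1)) ((1 - √(1 - 4 * x)) / 2) := by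
  have hsum := (summable_norm_catalan_mul_pow (x := x) (abs_lt.2 ⟨by linarith, hx4⟩)).of_norm
  have hshift : (fun n => (catalan n : ℝ) * x ^ (n + 1)) = fun n => x * (catalan n * x ^ n) :=
    funext fun n => by ring
  rw [hshift, sqrt_one_sub_four_mul_eq hx hx4, sub_sub_cancel, mul_assoc,
    mul_div_cancel_left₀ _ two_ne_zero]
  exact hsum.hasSum.mul_left x

lemma hasSum_centralBinom_mul_pow (hx : 0 ≤ x) (hx4 : x < 1 / 4) :
    HasSum (fun n => (centralBinom n : ℝ) * x ^ n) (√(1 - 4 * x))⁻¹ := by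
  have habs : |x| < 1 / 4 := abs_lt.2 ⟨by linarith, hx4⟩
  rw [sqrt_one_sub_four_mul_eq hx hx4, inv_eq_of_mul_eq_one_left]
  · exact (summable_norm_centralBinom_mul_pow habs).of_norm.hasSum
  · linear_combination (two_mul_tsum_catalan_mul_tsum_centralBinom_add_one habs).symm

end CatalanSeries

lemma one_sub_sqrt_one_sub_four_mul_div_two_eq_mul_catalanGF (x : ℝ) :
    (1 - √(1 - 4 * x)) / 2 = x * catalanGF x := by
  rw [catalanGF]
  split_ifs with hx
  · simp [hx]
  · field_simp

lemma tsum_pow_succ_mul_catalan_mul {x t : ℝ} (hx : 0 ≤ x) (hx4 : x < 1 / 4) (ht0 : 0 ≤ t)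
    (ht1 : t ≤ 1) (a c : ℝ) :
    ∑' n : ℕ, x ^ (n + 1) * catalan n * ((n + 1) + a - c * (1 - t ^ (n + 1))) =
      x * (√(1 - 4 * x))⁻¹ + (a - c) * ((1 - √(1 - 4 * x)) / 2) +
        c * ((1 - √(1 - 4 * (t * x))) / 2) := by
  have htx : t * x ≤ x := mul_le_of_le_one_left hx ht1
  refine HasSum.tsum_eq ?_
  refine ((((hasSum_centralBinom_mul_pow hx hx4).mul_left x).add
    ((hasSum_catalan_mul_pow_succ hx hx4).mul_left (a - c))).add
      ((hasSum_catalan_mul_pow_succ (mul_nonneg ht0 hx) (by linarith)).mul_left c)).congr_fun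
    fun n => ?_
  rw [← succ_mul_catalan_eq_centralBinom]
  push_cast
  ring

/-- The long-term apparent hashrate of the Lead Stubborn miner:
`E[Z]/E[L] = q(p + pq - q²)/(p + pq - q) - (pq(p-q)(1-γ)/γ)(1 - p(1-γ)Ĉ((1-γ)pq))/(p + pq - q)`,
where `E[Z] = ∑_{n ≥ 1} (pq)^n C_(n-1) (n + q - (p(1-γ)/γ)(1 - (1-γ)^n))` (the sum over
`n ≥ 1` being written with the index shift `n ↦ n + 1`) and `E[L] = (p - q + pq)/(p - q)`. -/
theorem lsm_apparent_hashrate (q p γ : ℝ) (hq0 : 0 < q) (hq : q < 1 / 2)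
    (hp : p = 1 - q) (hγ0 : 0 < γ) (hγ1 : γ ≤ 1) :
    (∑' n : ℕ, (p * q) ^ (n + 1) * catalanC n *
        (((n : ℝ) + 1) + q - (p * (1 - γ) / γ) * (1 - (1 - γ) ^ (n + 1)))) /
      ((p - q + p * q) / (p - q)) =
      q * (p + p * q - q ^ 2) / (p + p * q - q) -
        (p * q * (p - q) * (1 - γ) / γ) *
          (1 - p * (1 - γ) * catalanGF ((1 - γ) * p * q)) / (p + p * q - q) := by
  subst hp
  have hpq : 0 < 1 - q - q := by linarith
  have hsqrt : √(1 - 4 * ((1 - q) * q)) = 1 - q - q := by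
    rw [Real.sqrt_eq_iff_mul_self_eq (by nlinarith) hpq.le]; ring
  simp_rw [catalanC_eq_catalan]
  rw [tsum_pow_succ_mul_catalan_mul (by nlinarith) (by nlinarith) (by linarith) (by linarith),
    hsqrt, one_sub_sqrt_one_sub_four_mul_div_two_eq_mul_catalanGF, ← mul_assoc]
  have hEL : 0 < 1 - q - q + (1 - q) * q := by nlinarith
  field_simp
  ring
end
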